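/- The second moment of the inner product between the estimation error and the estimate satisfies E[|q̃ᵀ q̂*|²] = N · γ · (β − γ), where q̃ᵀ q̂* = Σ_{n=1}^N q̃_n · conj(q̂_n). -/

import Mathlib

open MeasureTheory ProbabilityTheory Complex

/-- A random vector `q : Ω → Fin N → ℂ` is `CN(0, σ² I_N)`: its `N` entries are
independent, and each entry has independent real and imaginary parts, both
distributed `N(0, σ²/2)`. -/
def IsCNVec {Ω : Type*} [MeasureSpace Ω] (N : ℕ) (σ2 : ℝ)
    (q : Ω → Fin N → ℂ) : Prop :=
  iIndepFun (fun n ω => q ω n) volume ∧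
  ∀ n : Fin N,
    IndepFun (fun ω => (q ω n).re) (fun ω => (q ω n).im) volume ∧
    Measure.map (fun ω => (q ω n).re) volume
      = gaussianReal 0 (Real.toNNReal (σ2 / 2)) ∧
    Measure.map (fun ω => (q ω n).im) volume
      = gaussianReal 0 (Real.toNNReal (σ2 / 2))
open MeasureTheory Real

lemma integrable_pow_mul_exp_neg_mul_sq' {b : ℝ} (hb : 0 < b) (k : ℕ) :
    Integrable fun x : ℝ => x ^ k * Real.exp (-(b * x ^ 2)) := by
  have := integrable_rpow_mul_exp_neg_mul_sq hb (s := (k : ℝ))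
    (lt_of_lt_of_le neg_one_lt_zero (Nat.cast_nonneg k))
  simpa [Real.rpow_natCast, neg_mul] using this

lemma gauss_rec {b : ℝ} (hb : 0 < b) (k : ℕ) :
    ((k : ℝ) + 1) * ∫ x : ℝ, x ^ k * Real.exp (-(b * x ^ 2))
      = 2 * b * ∫ x : ℝ, x ^ (k + 2) * Real.exp (-(b * x ^ 2)) := by
  have hderiv : ∀ x : ℝ, HasDerivAt (fun x : ℝ => x ^ (k+1) * Real.exp (-(b * x ^ 2)))
      (((k:ℝ)+1) * (x ^ k * Real.exp (-(b * x ^ 2)))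
        - 2 * b * (x ^ (k+2) * Real.exp (-(b * x ^ 2)))) x := by
    intro x
    have h1 : HasDerivAt (fun x : ℝ => x ^ (k+1)) (((k:ℝ)+1) * x ^ k) x := by
      simpa using hasDerivAt_pow (k+1) x
    have h2 : HasDerivAt (fun x : ℝ => Real.exp (-(b * x ^ 2)))
        (Real.exp (-(b * x ^ 2)) * (-(b * (2 * x)))) x := by
      have hx : HasDerivAt (fun x : ℝ => -(b * x ^ 2)) (-(b * (2 * x))) x := by
        simpa using ((hasDerivAt_pow 2 x).const_mul b).fun_neg
      exact (Real.hasDerivAt_exp _).comp x hx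
    have := h1.fun_mul h2
    refine this.congr_deriv ?_
    ring
  have hint : Integrable (fun x : ℝ => ((k:ℝ)+1) * (x ^ k * Real.exp (-(b * x ^ 2)))
      - 2 * b * (x ^ (k+2) * Real.exp (-(b * x ^ 2)))) := by
    exact ((integrable_pow_mul_exp_neg_mul_sq' hb k).const_mul _).sub
      ((integrable_pow_mul_exp_neg_mul_sq' hb (k+2)).const_mul _)
  have h0 := integral_eq_zero_of_hasDerivAt_of_integrable hderiv hint
    (integrable_pow_mul_exp_neg_mul_sq' hb (k+1))
  rw [integral_sub ((integrable_pow_mul_exp_neg_mul_sq' hb k).const_mul _)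
      ((integrable_pow_mul_exp_neg_mul_sq' hb (k+2)).const_mul _),
    integral_const_mul, integral_const_mul] at h0
  linarith

lemma gauss_odd {b : ℝ} (hb : 0 < b) :
    ∫ x : ℝ, x ^ 1 * Real.exp (-(b * x ^ 2)) = 0 := by
  have hderiv : ∀ x : ℝ, HasDerivAt (fun x : ℝ => (-(2*b))⁻¹ * Real.exp (-(b * x ^ 2)))
      (x ^ 1 * Real.exp (-(b * x ^ 2))) x := by
    intro x
    have h2 : HasDerivAt (fun x : ℝ => Real.exp (-(b * x ^ 2)))
        (Real.exp (-(b * x ^ 2)) * (-(b * (2 * x)))) x := by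
      have hx : HasDerivAt (fun x : ℝ => -(b * x ^ 2)) (-(b * (2 * x))) x := by
        simpa using ((hasDerivAt_pow 2 x).const_mul b).fun_neg
      exact (Real.hasDerivAt_exp _).comp x hx
    have := h2.const_mul (-(2*b))⁻¹
    refine this.congr_deriv ?_
    have hb' : (2:ℝ)*b ≠ 0 := by positivity
    field_simp
  have hintf : Integrable (fun x : ℝ => (-(2*b))⁻¹ * Real.exp (-(b * x ^ 2))) := by
    have := (integrable_exp_neg_mul_sq hb).const_mul (-(2*b))⁻¹
    simpa [neg_mul] using this
  exact integral_eq_zero_of_hasDerivAt_of_integrable hderiv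
    (integrable_pow_mul_exp_neg_mul_sq' hb 1) hintf

open ProbabilityTheory ENNReal NNReal

section GaussMoments
variable {v : ℝ≥0}

lemma gaussianPDFReal_mul_eq (v : ℝ≥0) (g : ℝ → ℝ) (x : ℝ) :
    gaussianPDFReal 0 v x * g x
      = (Real.sqrt (2 * Real.pi * v))⁻¹ * (g x * Real.exp (-((2*(v:ℝ))⁻¹ * x ^ 2))) := by
  rw [gaussianPDFReal]
  have : -(x-0)^2/(2*(v:ℝ)) = -((2*(v:ℝ))⁻¹ * x^2) := by ring
  rw [this]; ring

lemma integral_fun_gaussianReal (hv : 0 < (v:ℝ)) (g : ℝ → ℝ) :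
    ∫ x, g x ∂(gaussianReal 0 v) = ∫ x, gaussianPDFReal 0 v x * g x := by
  rw [gaussianReal_of_var_ne_zero 0 (by exact_mod_cast hv.ne')]
  have : (gaussianPDF 0 v) = fun x => ((Real.toNNReal (gaussianPDFReal 0 v x) : ℝ≥0) : ℝ≥0∞) := rfl
  rw [this, integral_withDensity_eq_integral_smul
    ((measurable_gaussianPDFReal 0 v).real_toNNReal)]
  congr 1
  ext x
  simp [NNReal.smul_def, Real.coe_toNNReal _ (gaussianPDFReal_nonneg 0 v x)]

lemma integrable_pow_gaussianReal (hv : 0 < (v:ℝ)) (k : ℕ) :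
    Integrable (fun x => x ^ k) (gaussianReal 0 v) := by
  rw [gaussianReal_of_var_ne_zero 0 (by exact_mod_cast hv.ne')]
  have h1 : (gaussianPDF 0 v) = fun x => ((Real.toNNReal (gaussianPDFReal 0 v x) : ℝ≥0) : ℝ≥0∞) := rfl
  rw [h1, integrable_withDensity_iff_integrable_smul
    ((measurable_gaussianPDFReal 0 v).real_toNNReal)]
  have hb : 0 < (2*(v:ℝ))⁻¹ := by positivity
  have h2 : (fun x => (Real.toNNReal (gaussianPDFReal 0 v x) : ℝ≥0) • x ^ k)
      = fun x => (Real.sqrt (2 * Real.pi * v))⁻¹ * (x ^ k * Real.exp (-((2*(v:ℝ))⁻¹ * x ^ 2))) := by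
    ext x
    rw [NNReal.smul_def, smul_eq_mul, Real.coe_toNNReal _ (gaussianPDFReal_nonneg 0 v x)]
    exact gaussianPDFReal_mul_eq v (fun x => x ^ k) x
  rw [h2]
  exact (integrable_pow_mul_exp_neg_mul_sq' hb k).const_mul _

lemma integral_pow_gaussianReal (hv : 0 < (v:ℝ)) (k : ℕ) :
    ∫ x, x ^ k ∂(gaussianReal 0 v)
      = (Real.sqrt (2 * Real.pi * v))⁻¹ * ∫ x, x ^ k * Real.exp (-((2*(v:ℝ))⁻¹ * x ^ 2)) := by
  rw [integral_fun_gaussianReal hv]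
  simp_rw [gaussianPDFReal_mul_eq v (fun x => x ^ k)]
  rw [integral_const_mul]

lemma integral_gaussianReal_moments (hv : 0 < (v:ℝ)) :
    (∫ x, x ^ 1 ∂(gaussianReal 0 v)) = 0 ∧
    (∫ x, x ^ 2 ∂(gaussianReal 0 v)) = v ∧
    (∫ x, x ^ 3 ∂(gaussianReal 0 v)) = 0 ∧
    (∫ x, x ^ 4 ∂(gaussianReal 0 v)) = 3 * (v:ℝ) ^ 2 := by
  have hb : 0 < (2*(v:ℝ))⁻¹ := by positivity
  set b := (2*(v:ℝ))⁻¹ with hbdef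
  set C := (Real.sqrt (2 * Real.pi * (v:ℝ)))⁻¹ with hC
  set I : ℕ → ℝ := fun k => ∫ x, x ^ k * Real.exp (-(b * x ^ 2)) with hI
  have h2b : (0:ℝ) < 2 * b := by positivity
  have hbv : (2*b) * (v:ℝ) = 1 := by rw [hbdef]; field_simp
  have hint : ∀ k : ℕ, ∫ x, x ^ k ∂(gaussianReal 0 v) = C * I k := fun k =>
    integral_pow_gaussianReal hv k
  have hnorm : C * I 0 = 1 := by
    rw [← hint 0]
    simp
  have e0 : I 0 = 2 * b * I 2 := by
    have h := gauss_rec hb 0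
    norm_num at h
    rw [hI]
    norm_num
    exact h
  have e1 : I 1 = 0 := gauss_odd hb
  have e3 : 2 * I 1 = 2 * b * I 3 := by
    have h := gauss_rec hb 1
    norm_num at h
    rw [hI]
    norm_num
    exact h
  have e4 : 3 * I 2 = 2 * b * I 4 := by
    have h := gauss_rec hb 2
    norm_num at h
    exact h
  have hCI2 : C * I 2 = v := by
    refine mul_left_cancel₀ (ne_of_gt h2b) ?_
    calc (2*b) * (C * I 2) = C * (2 * b * I 2) := by ring
    _ = C * I 0 := by rw [← e0]
    _ = 1 := hnorm
    _ = (2*b) * v := hbv.symm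
  refine ⟨?_, ?_, ?_, ?_⟩
  · rw [hint 1, e1, mul_zero]
  · rw [hint 2]; exact hCI2
  · rw [hint 3]
    have : I 3 = 0 := by
      refine mul_left_cancel₀ (ne_of_gt h2b) ?_
      rw [← e3, e1]; ring
    rw [this, mul_zero]
  · rw [hint 4]
    refine mul_left_cancel₀ (ne_of_gt h2b) ?_
    calc (2*b) * (C * I 4) = C * (2 * b * I 4) := by ring
    _ = C * (3 * I 2) := by rw [← e4]
    _ = 3 * (C * I 2) := by ring
    _ = 3 * (v:ℝ) := by rw [hCI2]
    _ = (2*b) * (3 * (v:ℝ)^2) := by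
        have h' : (2*b) * (3 * (v:ℝ)^2) = 3 * (v:ℝ) * ((2*b) * v) := by ring
        rw [h', hbv, mul_one]
end GaussMoments
section Helpers
open MeasureTheory ProbabilityTheory Complex
variable {Ω : Type*} [MeasureSpace Ω] [IsProbabilityMeasure (volume : Measure Ω)]

lemma indep_integral_cmul {X Y : Ω → ℂ} (h : IndepFun X Y volume)
    (hX : Integrable X volume) (hY : Integrable Y volume) :
    ∫ ω, X ω * Y ω = (∫ ω, X ω) * ∫ ω, Y ω := by
  have hrr : IndepFun (fun ω => (X ω).re) (fun ω => (Y ω).re) volume :=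
    h.comp Complex.measurable_re Complex.measurable_re
  have hri : IndepFun (fun ω => (X ω).re) (fun ω => (Y ω).im) volume :=
    h.comp Complex.measurable_re Complex.measurable_im
  have hir : IndepFun (fun ω => (X ω).im) (fun ω => (Y ω).re) volume :=
    h.comp Complex.measurable_im Complex.measurable_re
  have hii : IndepFun (fun ω => (X ω).im) (fun ω => (Y ω).im) volume :=
    h.comp Complex.measurable_im Complex.measurable_im
  have hXr : Integrable (fun ω => (X ω).re) volume := hX.re
  have hXi : Integrable (fun ω => (X ω).im) volume := hX.im
  have hYr : Integrable (fun ω => (Y ω).re) volume := hY.re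
  have hYi : Integrable (fun ω => (Y ω).im) volume := hY.im
  have irr : ∫ ω, (X ω).re * (Y ω).re = (∫ ω, (X ω).re) * ∫ ω, (Y ω).re :=
    hrr.integral_mul_eq_mul_integral hXr.aestronglyMeasurable hYr.aestronglyMeasurable
  have iri : ∫ ω, (X ω).re * (Y ω).im = (∫ ω, (X ω).re) * ∫ ω, (Y ω).im :=
    hri.integral_mul_eq_mul_integral hXr.aestronglyMeasurable hYi.aestronglyMeasurable
  have iir : ∫ ω, (X ω).im * (Y ω).re = (∫ ω, (X ω).im) * ∫ ω, (Y ω).re :=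
    hir.integral_mul_eq_mul_integral hXi.aestronglyMeasurable hYr.aestronglyMeasurable
  have iii : ∫ ω, (X ω).im * (Y ω).im = (∫ ω, (X ω).im) * ∫ ω, (Y ω).im :=
    hii.integral_mul_eq_mul_integral hXi.aestronglyMeasurable hYi.aestronglyMeasurable
  have Irr : Integrable (fun ω => (X ω).re * (Y ω).re) volume := hrr.integrable_mul hXr hYr
  have Iri : Integrable (fun ω => (X ω).re * (Y ω).im) volume := hri.integrable_mul hXr hYi
  have Iir : Integrable (fun ω => (X ω).im * (Y ω).re) volume := hir.integrable_mul hXi hYr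
  have Iii : Integrable (fun ω => (X ω).im * (Y ω).im) volume := hii.integrable_mul hXi hYi
  have hXY : Integrable (fun ω => X ω * Y ω) volume := h.integrable_mul hX hY
  have eXr : (∫ ω, (X ω).re) = (∫ ω, X ω).re := by simpa using integral_re hX
  have eXi : (∫ ω, (X ω).im) = (∫ ω, X ω).im := by simpa using integral_im hX
  have eYr : (∫ ω, (Y ω).re) = (∫ ω, Y ω).re := by simpa using integral_re hY
  have eYi : (∫ ω, (Y ω).im) = (∫ ω, Y ω).im := by simpa using integral_im hY
  apply Complex.ext
  · have h1 : (∫ ω, (X ω * Y ω)).re = ∫ ω, (X ω * Y ω).re := by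
      simpa using (integral_re hXY).symm
    rw [h1]
    simp only [Complex.mul_re]
    rw [integral_sub Irr Iii, irr, iii, eXr, eXi, eYr, eYi]
  · have h1 : (∫ ω, (X ω * Y ω)).im = ∫ ω, (X ω * Y ω).im := by
      simpa using (integral_im hXY).symm
    rw [h1]
    simp only [Complex.mul_im]
    rw [integral_add Iri Iir, iri, iir, eXr, eXi, eYr, eYi]

end Helpers
section RealMoments
open MeasureTheory ProbabilityTheory Complex
variable {Ω : Type*} [MeasureSpace Ω] [IsProbabilityMeasure (volume : Measure Ω)]

lemma integrable_cconj {f : Ω → ℂ} (hf : Integrable f volume) :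
    Integrable (fun ω => (starRingEnd ℂ) (f ω)) volume := by
  refine ⟨Complex.continuous_conj.comp_aestronglyMeasurable hf.1, ?_⟩
  have := hf.2
  simpa [HasFiniteIntegral] using this

variable {R : Ω → ℝ} {t : ℝ}

lemma rmom_int (hm : Measurable R)
    (hlaw : Measure.map R volume = gaussianReal 0 (Real.toNNReal (t/2))) (ht : 0 < t)
    (k : ℕ) : Integrable (fun ω => R ω ^ k) volume := by
  have hv : 0 < ((Real.toNNReal (t/2)) : ℝ) := by
    rw [Real.coe_toNNReal _ (by positivity : (0:ℝ) ≤ t/2)]; positivity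
  have h := integrable_pow_gaussianReal hv k
  rw [← hlaw] at h
  exact (integrable_map_measure (Measurable.aestronglyMeasurable
    (f := fun x : ℝ => x ^ k) (by measurability)) hm.aemeasurable).mp h

lemma rmom_val (hm : Measurable R)
    (hlaw : Measure.map R volume = gaussianReal 0 (Real.toNNReal (t/2))) (ht : 0 < t) :
    (∫ ω, R ω ^ 1) = 0 ∧ (∫ ω, R ω ^ 2) = t/2 ∧ (∫ ω, R ω ^ 3) = 0 ∧
    (∫ ω, R ω ^ 4) = 3 * (t/2) ^ 2 := by
  have hv : 0 < ((Real.toNNReal (t/2)) : ℝ) := by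
    rw [Real.coe_toNNReal _ (by positivity : (0:ℝ) ≤ t/2)]; positivity
  have hcoe : ((Real.toNNReal (t/2)) : ℝ) = t/2 :=
    Real.coe_toNNReal _ (by positivity : (0:ℝ) ≤ t/2)
  obtain ⟨h1, h2, h3, h4⟩ := integral_gaussianReal_moments hv
  have key : ∀ k : ℕ, (∫ ω, R ω ^ k) = ∫ x, x ^ k ∂(gaussianReal 0 (Real.toNNReal (t/2))) := by
    intro k
    rw [← hlaw]
    exact (integral_map hm.aemeasurable (Measurable.aestronglyMeasurable
      (f := fun x : ℝ => x ^ k) (by measurability))).symm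
  refine ⟨?_, ?_, ?_, ?_⟩
  · rw [key 1, h1]
  · rw [key 2, h2, hcoe]
  · rw [key 3, h3]
  · rw [key 4, h4, hcoe]

end RealMoments
section Combine
open MeasureTheory ProbabilityTheory Complex
variable {Ω : Type*} [MeasureSpace Ω] [IsProbabilityMeasure (volume : Measure Ω)]
variable {N : ℕ} {q z : Ω → Fin N → ℂ}

lemma combined_iIndep (hqm : Measurable q) (hzm : Measurable z)
    (hq1 : iIndepFun (fun n ω => q ω n) volume)
    (hz1 : iIndepFun (fun n ω => z ω n) volume)
    (hqz : IndepFun q z volume) :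
    iIndepFun
      (Sum.elim (fun n ω => q ω n) (fun n ω => z ω n) : Fin N ⊕ Fin N → Ω → ℂ) volume := by
  rw [iIndepFun_iff_measure_inter_preimage_eq_mul]
  intro S sets Hmeas
  classical
  set Aq : Set (Fin N → ℂ) := ⋂ n ∈ S.toLeft, (fun v : Fin N → ℂ => v n) ⁻¹' sets (Sum.inl n)
    with hAq
  set Az : Set (Fin N → ℂ) := ⋂ n ∈ S.toRight, (fun v : Fin N → ℂ => v n) ⁻¹' sets (Sum.inr n)
    with hAz
  have hAqm : MeasurableSet Aq := by
    refine MeasurableSet.biInter (Finset.countable_toSet _) fun n hn => ?_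
    exact measurable_pi_apply n (Hmeas _ (Finset.mem_toLeft.mp hn))
  have hAzm : MeasurableSet Az := by
    refine MeasurableSet.biInter (Finset.countable_toSet _) fun n hn => ?_
    exact measurable_pi_apply n (Hmeas _ (Finset.mem_toRight.mp hn))
  have hsplit : (⋂ i ∈ S, Sum.elim (fun n ω => q ω n) (fun n ω => z ω n) i ⁻¹' sets i)
      = q ⁻¹' Aq ∩ z ⁻¹' Az := by
    ext ω
    simp only [Set.mem_iInter, Set.mem_inter_iff, Set.mem_preimage, hAq, hAz,
      Finset.mem_toLeft, Finset.mem_toRight]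
    constructor
    · intro h
      exact ⟨fun n hn => h (Sum.inl n) hn, fun n hn => h (Sum.inr n) hn⟩
    · rintro ⟨h1, h2⟩ i hi
      cases i with
      | inl n => exact h1 n hi
      | inr n => exact h2 n hi
  rw [hsplit, hqz.measure_inter_preimage_eq_mul Aq Az hAqm hAzm]
  have hq' : volume (q ⁻¹' Aq) = ∏ n ∈ S.toLeft, volume ((fun ω => q ω n) ⁻¹' sets (Sum.inl n)) := by
    have : q ⁻¹' Aq = ⋂ n ∈ S.toLeft, (fun ω => q ω n) ⁻¹' sets (Sum.inl n) := by
      rw [hAq]; ext ω; simp [Set.mem_iInter]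
    rw [this]
    exact hq1.measure_inter_preimage_eq_mul S.toLeft
      (fun n hn => Hmeas _ (Finset.mem_toLeft.mp hn))
  have hz' : volume (z ⁻¹' Az) = ∏ n ∈ S.toRight, volume ((fun ω => z ω n) ⁻¹' sets (Sum.inr n)) := by
    have : z ⁻¹' Az = ⋂ n ∈ S.toRight, (fun ω => z ω n) ⁻¹' sets (Sum.inr n) := by
      rw [hAz]; ext ω; simp [Set.mem_iInter]
    rw [this]
    exact hz1.measure_inter_preimage_eq_mul S.toRight
      (fun n hn => Hmeas _ (Finset.mem_toRight.mp hn))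
  rw [hq', hz']
  rw [← Finset.toLeft_disjSum_toRight (u := S), Finset.prod_disjSum]
  simp
end Combine
section CTable
open MeasureTheory ProbabilityTheory Complex

lemma c20 (w : ℂ) : w ^ 2 = ((w.re^2 - w.im^2 : ℝ) : ℂ) + I * ((2*(w.re^1 * w.im^1) : ℝ) : ℂ) := by
  apply Complex.ext <;>
    simp [pow_two, Complex.mul_re, Complex.mul_im, Complex.add_re, Complex.add_im] <;> ring

lemma c11 (w : ℂ) : w * (starRingEnd ℂ) w = ((w.re^2 + w.im^2 : ℝ) : ℂ) := by
  rw [Complex.mul_conj]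
  norm_cast
  simp [Complex.normSq_apply]; ring

lemma c21 (w : ℂ) : w ^ 2 * (starRingEnd ℂ) w
    = ((w.re^3 + w.re^1 * w.im^2 : ℝ) : ℂ) + I * ((w.re^2 * w.im^1 + w.im^3 : ℝ) : ℂ) := by
  apply Complex.ext <;>
    simp [pow_succ, pow_two, Complex.mul_re, Complex.mul_im, Complex.add_re, Complex.add_im] <;>
    ring

lemma c22 (w : ℂ) : w ^ 2 * (starRingEnd ℂ) w ^ 2
    = ((w.re^4 + 2*(w.re^2 * w.im^2) + w.im^4 : ℝ) : ℂ) := by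
  have : w ^ 2 * (starRingEnd ℂ) w ^ 2 = (w * (starRingEnd ℂ) w) ^ 2 := by ring
  rw [this, c11]
  norm_cast
  ring

structure CMomTable {Ω : Type*} [MeasureSpace Ω] (U : Ω → ℂ) (t : ℝ) : Prop where
  meas : Measurable U
  int10 : Integrable U volume
  int01 : Integrable (fun ω => (starRingEnd ℂ) (U ω)) volume
  int20 : Integrable (fun ω => U ω ^ 2) volume
  int02 : Integrable (fun ω => (starRingEnd ℂ) (U ω) ^ 2) volume
  int11 : Integrable (fun ω => U ω * (starRingEnd ℂ) (U ω)) volume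
  int21 : Integrable (fun ω => U ω ^ 2 * (starRingEnd ℂ) (U ω)) volume
  int12 : Integrable (fun ω => U ω * (starRingEnd ℂ) (U ω) ^ 2) volume
  int22 : Integrable (fun ω => U ω ^ 2 * (starRingEnd ℂ) (U ω) ^ 2) volume
  val10 : ∫ ω, U ω = 0
  val01 : ∫ ω, (starRingEnd ℂ) (U ω) = 0
  val20 : (∫ ω, U ω ^ 2) = 0
  val02 : (∫ ω, (starRingEnd ℂ) (U ω) ^ 2) = 0
  val11 : (∫ ω, U ω * (starRingEnd ℂ) (U ω)) = (t : ℂ)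
  val21 : (∫ ω, U ω ^ 2 * (starRingEnd ℂ) (U ω)) = 0
  val12 : (∫ ω, U ω * (starRingEnd ℂ) (U ω) ^ 2) = 0
  val22 : (∫ ω, U ω ^ 2 * (starRingEnd ℂ) (U ω) ^ 2) = ((2 * t ^ 2 : ℝ) : ℂ)

variable {Ω : Type*} [MeasureSpace Ω] [IsProbabilityMeasure (volume : Measure Ω)]

lemma cmom_table {U : Ω → ℂ} {t : ℝ} (hUm : Measurable U) (ht : 0 < t)
    (hri : IndepFun (fun ω => (U ω).re) (fun ω => (U ω).im) volume)
    (hlr : Measure.map (fun ω => (U ω).re) volume = gaussianReal 0 (Real.toNNReal (t/2)))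
    (hli : Measure.map (fun ω => (U ω).im) volume = gaussianReal 0 (Real.toNNReal (t/2))) :
    CMomTable U t := by
  have hRm : Measurable (fun ω => (U ω).re) := Complex.measurable_re.comp hUm
  have hSm : Measurable (fun ω => (U ω).im) := Complex.measurable_im.comp hUm
  have intR : ∀ k, Integrable (fun ω => (U ω).re ^ k) volume := rmom_int hRm hlr ht
  have intS : ∀ k, Integrable (fun ω => (U ω).im ^ k) volume := rmom_int hSm hli ht
  obtain ⟨r1, r2, r3, r4⟩ := rmom_val hRm hlr ht
  obtain ⟨s1, s2, s3, s4⟩ := rmom_val hSm hli ht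
  have hIndep : ∀ p q : ℕ,
      IndepFun (fun ω => (U ω).re ^ p) (fun ω => (U ω).im ^ q) volume := fun p q =>
    hri.comp (measurable_id.pow_const p) (measurable_id.pow_const q)
  have pairInt : ∀ p q : ℕ, Integrable (fun ω => (U ω).re ^ p * (U ω).im ^ q) volume :=
    fun p q => (hIndep p q).integrable_mul (intR p) (intS q)
  have pairVal : ∀ p q : ℕ, (∫ ω, (U ω).re ^ p * (U ω).im ^ q)
      = (∫ ω, (U ω).re ^ p) * ∫ ω, (U ω).im ^ q :=
    fun p q => (hIndep p q).integral_mul_eq_mul_integral (intR p).aestronglyMeasurable (intS q).aestronglyMeasurable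
  have intR1 : Integrable (fun ω => (U ω).re) volume := by simpa using intR 1
  have intS1 : Integrable (fun ω => (U ω).im) volume := by simpa using intS 1
  have vR1 : (∫ ω, (U ω).re) = 0 := by simpa using r1
  have vS1 : (∫ ω, (U ω).im) = 0 := by simpa using s1
  -- pointwise forms
  have eU : U = fun ω => (((U ω).re : ℝ) : ℂ) + I * (((U ω).im : ℝ) : ℂ) := by
    funext ω
    conv_lhs => rw [← Complex.re_add_im (U ω)]
    ring
  have e20 : (fun ω => U ω ^ 2) = fun ω =>
      (((U ω).re^2 - (U ω).im^2 : ℝ) : ℂ) + I * ((2*((U ω).re^1 * (U ω).im^1) : ℝ) : ℂ) :=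
    funext fun ω => c20 (U ω)
  have e11 : (fun ω => U ω * (starRingEnd ℂ) (U ω)) = fun ω =>
      (((U ω).re^2 + (U ω).im^2 : ℝ) : ℂ) := funext fun ω => c11 (U ω)
  have e21 : (fun ω => U ω ^ 2 * (starRingEnd ℂ) (U ω)) = fun ω =>
      (((U ω).re^3 + (U ω).re^1 * (U ω).im^2 : ℝ) : ℂ)
        + I * (((U ω).re^2 * (U ω).im^1 + (U ω).im^3 : ℝ) : ℂ) :=
    funext fun ω => c21 (U ω)
  have e22 : (fun ω => U ω ^ 2 * (starRingEnd ℂ) (U ω) ^ 2) = fun ω =>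
      (((U ω).re^4 + 2*((U ω).re^2 * (U ω).im^2) + (U ω).im^4 : ℝ) : ℂ) :=
    funext fun ω => c22 (U ω)
  have e02 : (fun ω => (starRingEnd ℂ) (U ω) ^ 2) = fun ω => (starRingEnd ℂ) (U ω ^ 2) := by
    funext ω; rw [map_pow]
  have e12 : (fun ω => U ω * (starRingEnd ℂ) (U ω) ^ 2)
      = fun ω => (starRingEnd ℂ) (U ω ^ 2 * (starRingEnd ℂ) (U ω)) := by
    funext ω; simp only [map_mul, map_pow, Complex.conj_conj]; ring
  -- integrabilities
  have i10 : Integrable U volume := by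
    rw [eU]
    exact intR1.ofReal.add ((intS1.ofReal).const_mul I)
  have i20 : Integrable (fun ω => U ω ^ 2) volume := by
    rw [e20]
    exact ((intR 2).sub (intS 2)).ofReal.add ((((pairInt 1 1).const_mul 2).ofReal).const_mul I)
  have i11 : Integrable (fun ω => U ω * (starRingEnd ℂ) (U ω)) volume := by
    rw [e11]
    exact ((intR 2).add (intS 2)).ofReal
  have i21 : Integrable (fun ω => U ω ^ 2 * (starRingEnd ℂ) (U ω)) volume := by
    rw [e21]
    exact ((intR 3).add (pairInt 1 2)).ofReal.add
      ((((pairInt 2 1).add (intS 3)).ofReal).const_mul I)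
  have i22 : Integrable (fun ω => U ω ^ 2 * (starRingEnd ℂ) (U ω) ^ 2) volume := by
    rw [e22]
    exact (((intR 4).add ((pairInt 2 2).const_mul 2)).add (intS 4)).ofReal
  have i01 : Integrable (fun ω => (starRingEnd ℂ) (U ω)) volume := integrable_cconj i10
  have i02 : Integrable (fun ω => (starRingEnd ℂ) (U ω) ^ 2) volume := by
    rw [e02]; exact integrable_cconj i20
  have i12 : Integrable (fun ω => U ω * (starRingEnd ℂ) (U ω) ^ 2) volume := by
    rw [e12]; exact integrable_cconj i21
  -- values
  have iOf : ∀ g : Ω → ℝ, (∫ ω, ((g ω : ℝ) : ℂ)) = ((∫ ω, g ω : ℝ) : ℂ) := fun g =>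
    integral_ofReal
  have iMulI : ∀ g : Ω → ℝ, (∫ ω, I * ((g ω : ℝ) : ℂ)) = I * ((∫ ω, g ω : ℝ) : ℂ) := fun g => by
    rw [integral_const_mul, iOf g]
  have v10 : ∫ ω, U ω = 0 := by
    have A : Integrable (fun ω => (((U ω).re : ℝ) : ℂ)) volume := intR1.ofReal
    have B : Integrable (fun ω => I * (((U ω).im : ℝ) : ℂ)) volume := (intS1.ofReal).const_mul I
    rw [eU, integral_add A B, iOf, iMulI, vR1, vS1]
    simp
  have v20 : (∫ ω, U ω ^ 2) = 0 := by
    have A : Integrable (fun ω => (((U ω).re^2 - (U ω).im^2 : ℝ) : ℂ)) volume :=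
      ((intR 2).sub (intS 2)).ofReal
    have B : Integrable (fun ω => I * ((2*((U ω).re^1 * (U ω).im^1) : ℝ) : ℂ)) volume :=
      (((pairInt 1 1).const_mul 2).ofReal).const_mul I
    have hsub : (∫ ω, ((U ω).re^2 - (U ω).im^2)) = 0 := by
      rw [integral_sub (intR 2) (intS 2), r2, s2]; ring
    have hmul : (∫ ω, 2*((U ω).re^1 * (U ω).im^1)) = 0 := by
      rw [integral_const_mul, pairVal 1 1]
      simp only [pow_one] at *
      rw [vR1]; ring
    rw [e20, integral_add A B, iOf, iMulI, hsub, hmul]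
    simp
  have v11 : (∫ ω, U ω * (starRingEnd ℂ) (U ω)) = (t : ℂ) := by
    have hadd : (∫ ω, ((U ω).re^2 + (U ω).im^2)) = t := by
      rw [integral_add (intR 2) (intS 2), r2, s2]; ring
    rw [e11, iOf, hadd]
  have v21 : (∫ ω, U ω ^ 2 * (starRingEnd ℂ) (U ω)) = 0 := by
    have A : Integrable (fun ω => (((U ω).re^3 + (U ω).re^1 * (U ω).im^2 : ℝ) : ℂ)) volume :=
      ((intR 3).add (pairInt 1 2)).ofReal
    have B : Integrable
        (fun ω => I * (((U ω).re^2 * (U ω).im^1 + (U ω).im^3 : ℝ) : ℂ)) volume :=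
      (((pairInt 2 1).add (intS 3)).ofReal).const_mul I
    have h1 : (∫ ω, ((U ω).re^3 + (U ω).re^1 * (U ω).im^2)) = 0 := by
      rw [integral_add (intR 3) (pairInt 1 2), r3, pairVal 1 2]
      simp only [pow_one]
      rw [vR1]; ring
    have h2 : (∫ ω, ((U ω).re^2 * (U ω).im^1 + (U ω).im^3)) = 0 := by
      rw [integral_add (pairInt 2 1) (intS 3), s3, pairVal 2 1]
      simp only [pow_one]
      rw [vS1]; ring
    rw [e21, integral_add A B, iOf, iMulI, h1, h2]
    simp
  have v22 : (∫ ω, U ω ^ 2 * (starRingEnd ℂ) (U ω) ^ 2) = ((2 * t ^ 2 : ℝ) : ℂ) := by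
    have h1 : (∫ ω, ((U ω).re^4 + 2*((U ω).re^2 * (U ω).im^2) + (U ω).im^4)) = 2 * t ^ 2 := by
      have C : Integrable (fun ω => (U ω).re^4 + 2*((U ω).re^2 * (U ω).im^2)) volume :=
        (intR 4).add ((pairInt 2 2).const_mul 2)
      rw [integral_add C (intS 4), integral_add (intR 4) ((pairInt 2 2).const_mul 2),
        integral_const_mul, pairVal 2 2, r4, s4, r2, s2]
      ring
    rw [e22, iOf, h1]
  have v01 : ∫ ω, (starRingEnd ℂ) (U ω) = 0 := by
    rw [integral_conj, v10, map_zero]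
  have v02 : (∫ ω, (starRingEnd ℂ) (U ω) ^ 2) = 0 := by
    rw [e02, integral_conj, v20, map_zero]
  have v12 : (∫ ω, U ω * (starRingEnd ℂ) (U ω) ^ 2) = 0 := by
    rw [e12, integral_conj, v21, map_zero]
  exact ⟨hUm, i10, i01, i20, i02, i11, i21, i12, i22, v10, v01, v20, v02, v11, v21, v12, v22⟩

end CTable
section MeanDiag
open MeasureTheory ProbabilityTheory Complex
variable {Ω : Type*} [MeasureSpace Ω] [IsProbabilityMeasure (volume : Measure Ω)]
variable {u w : Ω → ℂ} {p r : ℝ}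

lemma mean_lemma (huw : IndepFun u w volume) (Tu : CMomTable u p) (Tw : CMomTable w r)
    (a b c : ℝ) :
    Integrable (fun ω => (((a:ℝ):ℂ) * u ω - ((c:ℝ):ℂ) * w ω) *
      (starRingEnd ℂ) (((b:ℝ):ℂ) * u ω + ((c:ℝ):ℂ) * w ω)) volume ∧
    (∫ ω, (((a:ℝ):ℂ) * u ω - ((c:ℝ):ℂ) * w ω) *
      (starRingEnd ℂ) (((b:ℝ):ℂ) * u ω + ((c:ℝ):ℂ) * w ω)) = ((a*b*p - c^2*r : ℝ) : ℂ) := by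
  have mc : Measurable fun zc : ℂ => (starRingEnd ℂ) zc := Complex.continuous_conj.measurable
  have h1 : IndepFun u (fun ω => (starRingEnd ℂ) (w ω)) volume := huw.comp measurable_id mc
  have h2 : IndepFun w (fun ω => (starRingEnd ℂ) (u ω)) volume := huw.symm.comp measurable_id mc
  have i2 : Integrable (fun ω => u ω * (starRingEnd ℂ) (w ω)) volume :=
    h1.integrable_mul Tu.int10 Tw.int01
  have i3 : Integrable (fun ω => w ω * (starRingEnd ℂ) (u ω)) volume :=
    h2.integrable_mul Tw.int10 Tu.int01
  have v2 : (∫ ω, u ω * (starRingEnd ℂ) (w ω)) = 0 := by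
    rw [indep_integral_cmul h1 Tu.int10 Tw.int01, Tu.val10, zero_mul]
  have v3 : (∫ ω, w ω * (starRingEnd ℂ) (u ω)) = 0 := by
    rw [indep_integral_cmul h2 Tw.int10 Tu.int01, Tw.val10, zero_mul]
  have key : (fun ω => (((a:ℝ):ℂ) * u ω - ((c:ℝ):ℂ) * w ω) *
      (starRingEnd ℂ) (((b:ℝ):ℂ) * u ω + ((c:ℝ):ℂ) * w ω))
      = fun ω => ((a*b : ℝ) : ℂ) * (u ω * (starRingEnd ℂ) (u ω)) + ((a*c : ℝ) : ℂ) * (u ω * (starRingEnd ℂ) (w ω)) + ((-(b*c) : ℝ) : ℂ) * (w ω * (starRingEnd ℂ) (u ω)) + ((-(c^2) : ℝ) : ℂ) * (w ω * (starRingEnd ℂ) (w ω)) := by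
    funext ω
    simp only [map_add, map_mul, map_sub, Complex.conj_ofReal]
    push_cast
    ring
  have I1 : Integrable (fun ω => ((a*b : ℝ) : ℂ) * (u ω * (starRingEnd ℂ) (u ω))) volume := Tu.int11.const_mul _
  have I2 : Integrable (fun ω => ((a*c : ℝ) : ℂ) * (u ω * (starRingEnd ℂ) (w ω))) volume := i2.const_mul _
  have I3 : Integrable (fun ω => ((-(b*c) : ℝ) : ℂ) * (w ω * (starRingEnd ℂ) (u ω))) volume := i3.const_mul _
  have I4 : Integrable (fun ω => ((-(c^2) : ℝ) : ℂ) * (w ω * (starRingEnd ℂ) (w ω))) volume := Tw.int11.const_mul _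
  have S2 : Integrable (fun ω => ((a*b : ℝ) : ℂ) * (u ω * (starRingEnd ℂ) (u ω)) + ((a*c : ℝ) : ℂ) * (u ω * (starRingEnd ℂ) (w ω))) volume := I1.add I2
  have S3 : Integrable (fun ω => ((a*b : ℝ) : ℂ) * (u ω * (starRingEnd ℂ) (u ω)) + ((a*c : ℝ) : ℂ) * (u ω * (starRingEnd ℂ) (w ω)) + ((-(b*c) : ℝ) : ℂ) * (w ω * (starRingEnd ℂ) (u ω))) volume := S2.add I3
  have S4 : Integrable (fun ω => ((a*b : ℝ) : ℂ) * (u ω * (starRingEnd ℂ) (u ω)) + ((a*c : ℝ) : ℂ) * (u ω * (starRingEnd ℂ) (w ω)) + ((-(b*c) : ℝ) : ℂ) * (w ω * (starRingEnd ℂ) (u ω)) + ((-(c^2) : ℝ) : ℂ) * (w ω * (starRingEnd ℂ) (w ω))) volume := S3.add I4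
  have V1 : (∫ ω, ((a*b : ℝ) : ℂ) * (u ω * (starRingEnd ℂ) (u ω))) = ((a*b : ℝ) : ℂ) * ((p : ℝ) : ℂ) := by rw [integral_const_mul, Tu.val11]
  have V2 : (∫ ω, ((a*c : ℝ) : ℂ) * (u ω * (starRingEnd ℂ) (w ω))) = 0 := by rw [integral_const_mul, v2, mul_zero]
  have V3 : (∫ ω, ((-(b*c) : ℝ) : ℂ) * (w ω * (starRingEnd ℂ) (u ω))) = 0 := by rw [integral_const_mul, v3, mul_zero]
  have V4 : (∫ ω, ((-(c^2) : ℝ) : ℂ) * (w ω * (starRingEnd ℂ) (w ω))) = ((-(c^2) : ℝ) : ℂ) * ((r : ℝ) : ℂ) := by rw [integral_const_mul, Tw.val11]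
  constructor
  · rw [key]; exact S4
  · rw [key]
    rw [integral_add S3 I4, integral_add S2 I3, integral_add I1 I2, V1, V2, V3, V4]
    push_cast
    ring

lemma diag_lemma (huw : IndepFun u w volume) (Tu : CMomTable u p) (Tw : CMomTable w r)
    (a b c : ℝ) :
    Integrable (fun ω => ((((a:ℝ):ℂ) * u ω - ((c:ℝ):ℂ) * w ω) *
      (starRingEnd ℂ) (((b:ℝ):ℂ) * u ω + ((c:ℝ):ℂ) * w ω)) *
      (starRingEnd ℂ) ((((a:ℝ):ℂ) * u ω - ((c:ℝ):ℂ) * w ω) *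
      (starRingEnd ℂ) (((b:ℝ):ℂ) * u ω + ((c:ℝ):ℂ) * w ω))) volume ∧
    (∫ ω, ((((a:ℝ):ℂ) * u ω - ((c:ℝ):ℂ) * w ω) *
      (starRingEnd ℂ) (((b:ℝ):ℂ) * u ω + ((c:ℝ):ℂ) * w ω)) *
      (starRingEnd ℂ) ((((a:ℝ):ℂ) * u ω - ((c:ℝ):ℂ) * w ω) *
      (starRingEnd ℂ) (((b:ℝ):ℂ) * u ω + ((c:ℝ):ℂ) * w ω)))
      = ((2*a^2*b^2*p^2 + (a^2*c^2 - 2*a*b*c^2 + b^2*c^2)*(p*r) + 2*c^4*r^2 : ℝ) : ℂ) := by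
  have mc : Measurable fun zc : ℂ => (starRingEnd ℂ) zc := Complex.continuous_conj.measurable
  have hp1 : IndepFun (fun ω => u ω ^ 2 * (starRingEnd ℂ) (u ω)) (fun ω => (starRingEnd ℂ) (w ω)) volume :=
    huw.comp ((measurable_id.pow_const 2).mul mc) (mc)
  have ip1 : Integrable (fun ω => (u ω ^ 2 * (starRingEnd ℂ) (u ω)) * ((starRingEnd ℂ) (w ω))) volume :=
    hp1.integrable_mul Tu.int21 Tw.int01
  have vp1 : (∫ ω, (u ω ^ 2 * (starRingEnd ℂ) (u ω)) * ((starRingEnd ℂ) (w ω))) = (∫ ω, u ω ^ 2 * (starRingEnd ℂ) (u ω)) * ∫ ω, (starRingEnd ℂ) (w ω) :=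
    indep_integral_cmul hp1 Tu.int21 Tw.int01
  have hp2 : IndepFun (fun ω => u ω * (starRingEnd ℂ) (u ω) ^ 2) (fun ω => w ω) volume :=
    huw.comp (measurable_id.mul (mc.pow_const 2)) (measurable_id)
  have ip2 : Integrable (fun ω => (u ω * (starRingEnd ℂ) (u ω) ^ 2) * (w ω)) volume :=
    hp2.integrable_mul Tu.int12 Tw.int10
  have vp2 : (∫ ω, (u ω * (starRingEnd ℂ) (u ω) ^ 2) * (w ω)) = (∫ ω, u ω * (starRingEnd ℂ) (u ω) ^ 2) * ∫ ω, w ω :=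
    indep_integral_cmul hp2 Tu.int12 Tw.int10
  have hp3 : IndepFun (fun ω => u ω * (starRingEnd ℂ) (u ω)) (fun ω => w ω * (starRingEnd ℂ) (w ω)) volume :=
    huw.comp (measurable_id.mul mc) (measurable_id.mul mc)
  have ip3 : Integrable (fun ω => (u ω * (starRingEnd ℂ) (u ω)) * (w ω * (starRingEnd ℂ) (w ω))) volume :=
    hp3.integrable_mul Tu.int11 Tw.int11
  have vp3 : (∫ ω, (u ω * (starRingEnd ℂ) (u ω)) * (w ω * (starRingEnd ℂ) (w ω))) = (∫ ω, u ω * (starRingEnd ℂ) (u ω)) * ∫ ω, w ω * (starRingEnd ℂ) (w ω) :=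
    indep_integral_cmul hp3 Tu.int11 Tw.int11
  have hp4 : IndepFun (fun ω => u ω ^ 2) (fun ω => (starRingEnd ℂ) (w ω) ^ 2) volume :=
    huw.comp (measurable_id.pow_const 2) (mc.pow_const 2)
  have ip4 : Integrable (fun ω => (u ω ^ 2) * ((starRingEnd ℂ) (w ω) ^ 2)) volume :=
    hp4.integrable_mul Tu.int20 Tw.int02
  have vp4 : (∫ ω, (u ω ^ 2) * ((starRingEnd ℂ) (w ω) ^ 2)) = (∫ ω, u ω ^ 2) * ∫ ω, (starRingEnd ℂ) (w ω) ^ 2 :=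
    indep_integral_cmul hp4 Tu.int20 Tw.int02
  have hp5 : IndepFun (fun ω => (starRingEnd ℂ) (u ω) ^ 2) (fun ω => w ω ^ 2) volume :=
    huw.comp (mc.pow_const 2) (measurable_id.pow_const 2)
  have ip5 : Integrable (fun ω => ((starRingEnd ℂ) (u ω) ^ 2) * (w ω ^ 2)) volume :=
    hp5.integrable_mul Tu.int02 Tw.int20
  have vp5 : (∫ ω, ((starRingEnd ℂ) (u ω) ^ 2) * (w ω ^ 2)) = (∫ ω, (starRingEnd ℂ) (u ω) ^ 2) * ∫ ω, w ω ^ 2 :=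
    indep_integral_cmul hp5 Tu.int02 Tw.int20
  have hp6 : IndepFun (fun ω => u ω) (fun ω => w ω * (starRingEnd ℂ) (w ω) ^ 2) volume :=
    huw.comp (measurable_id) (measurable_id.mul (mc.pow_const 2))
  have ip6 : Integrable (fun ω => (u ω) * (w ω * (starRingEnd ℂ) (w ω) ^ 2)) volume :=
    hp6.integrable_mul Tu.int10 Tw.int12
  have vp6 : (∫ ω, (u ω) * (w ω * (starRingEnd ℂ) (w ω) ^ 2)) = (∫ ω, u ω) * ∫ ω, w ω * (starRingEnd ℂ) (w ω) ^ 2 :=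
    indep_integral_cmul hp6 Tu.int10 Tw.int12
  have hp7 : IndepFun (fun ω => (starRingEnd ℂ) (u ω)) (fun ω => w ω ^ 2 * (starRingEnd ℂ) (w ω)) volume :=
    huw.comp (mc) ((measurable_id.pow_const 2).mul mc)
  have ip7 : Integrable (fun ω => ((starRingEnd ℂ) (u ω)) * (w ω ^ 2 * (starRingEnd ℂ) (w ω))) volume :=
    hp7.integrable_mul Tu.int01 Tw.int21
  have vp7 : (∫ ω, ((starRingEnd ℂ) (u ω)) * (w ω ^ 2 * (starRingEnd ℂ) (w ω))) = (∫ ω, (starRingEnd ℂ) (u ω)) * ∫ ω, w ω ^ 2 * (starRingEnd ℂ) (w ω) :=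
    indep_integral_cmul hp7 Tu.int01 Tw.int21
  have key : (fun ω => ((((a:ℝ):ℂ) * u ω - ((c:ℝ):ℂ) * w ω) *
      (starRingEnd ℂ) (((b:ℝ):ℂ) * u ω + ((c:ℝ):ℂ) * w ω)) *
      (starRingEnd ℂ) ((((a:ℝ):ℂ) * u ω - ((c:ℝ):ℂ) * w ω) *
      (starRingEnd ℂ) (((b:ℝ):ℂ) * u ω + ((c:ℝ):ℂ) * w ω)))
      = fun ω => ((a^2*b^2 : ℝ) : ℂ) * (u ω ^ 2 * (starRingEnd ℂ) (u ω) ^ 2) + ((a^2*b*c - a*b^2*c : ℝ) : ℂ) * ((u ω ^ 2 * (starRingEnd ℂ) (u ω)) * ((starRingEnd ℂ) (w ω))) + ((a^2*b*c - a*b^2*c : ℝ) : ℂ) * ((u ω * (starRingEnd ℂ) (u ω) ^ 2) * (w ω)) + ((a^2*c^2 - 2*a*b*c^2 + b^2*c^2 : ℝ) : ℂ) * ((u ω * (starRingEnd ℂ) (u ω)) * (w ω * (starRingEnd ℂ) (w ω))) + ((-(a*b*c^2) : ℝ) : ℂ) * ((u ω ^ 2) * ((starRingEnd ℂ) (w ω)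 ^ 2)) + ((-(a*b*c^2) : ℝ) : ℂ) * (((starRingEnd ℂ) (u ω) ^ 2) * (w ω ^ 2)) + ((b*c^3 - a*c^3 : ℝ) : ℂ) * ((u ω) * (w ω * (starRingEnd ℂ) (w ω) ^ 2)) + ((b*c^3 - a*c^3 : ℝ) : ℂ) * (((starRingEnd ℂ) (u ω)) * (w ω ^ 2 * (starRingEnd ℂ) (w ω))) + ((c^4 : ℝ) : ℂ) * (w ω ^ 2 * (starRingEnd ℂ) (w ω) ^ 2) := by
    funext ω
    simp only [map_add, map_mul, map_sub, map_pow, Complex.conj_conj, Complex.conj_ofReal]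
    push_cast
    ring
  have I1 : Integrable (fun ω => ((a^2*b^2 : ℝ) : ℂ) * (u ω ^ 2 * (starRingEnd ℂ) (u ω) ^ 2)) volume := Tu.int22.const_mul _
  have I2 : Integrable (fun ω => ((a^2*b*c - a*b^2*c : ℝ) : ℂ) * ((u ω ^ 2 * (starRingEnd ℂ) (u ω)) * ((starRingEnd ℂ) (w ω)))) volume := ip1.const_mul _
  have I3 : Integrable (fun ω => ((a^2*b*c - a*b^2*c : ℝ) : ℂ) * ((u ω * (starRingEnd ℂ) (u ω) ^ 2) * (w ω))) volume := ip2.const_mul _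
  have I4 : Integrable (fun ω => ((a^2*c^2 - 2*a*b*c^2 + b^2*c^2 : ℝ) : ℂ) * ((u ω * (starRingEnd ℂ) (u ω)) * (w ω * (starRingEnd ℂ) (w ω)))) volume := ip3.const_mul _
  have I5 : Integrable (fun ω => ((-(a*b*c^2) : ℝ) : ℂ) * ((u ω ^ 2) * ((starRingEnd ℂ) (w ω) ^ 2))) volume := ip4.const_mul _
  have I6 : Integrable (fun ω => ((-(a*b*c^2) : ℝ) : ℂ) * (((starRingEnd ℂ) (u ω) ^ 2) * (w ω ^ 2))) volume := ip5.const_mul _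
  have I7 : Integrable (fun ω => ((b*c^3 - a*c^3 : ℝ) : ℂ) * ((u ω) * (w ω * (starRingEnd ℂ) (w ω) ^ 2))) volume := ip6.const_mul _
  have I8 : Integrable (fun ω => ((b*c^3 - a*c^3 : ℝ) : ℂ) * (((starRingEnd ℂ) (u ω)) * (w ω ^ 2 * (starRingEnd ℂ) (w ω)))) volume := ip7.const_mul _
  have I9 : Integrable (fun ω => ((c^4 : ℝ) : ℂ) * (w ω ^ 2 * (starRingEnd ℂ) (w ω) ^ 2)) volume := Tw.int22.const_mul _
  have S2 : Integrable (fun ω => ((a^2*b^2 : ℝ) : ℂ) * (u ω ^ 2 * (starRingEnd ℂ) (u ω) ^ 2) + ((a^2*b*c - a*b^2*c : ℝ) : ℂ) * ((u ω ^ 2 * (starRingEnd ℂ) (u ω)) * ((starRingEnd ℂ) (w ω)))) volume := I1.add I2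
  have S3 : Integrable (fun ω => ((a^2*b^2 : ℝ) : ℂ) * (u ω ^ 2 * (starRingEnd ℂ) (u ω) ^ 2) + ((a^2*b*c - a*b^2*c : ℝ) : ℂ) * ((u ω ^ 2 * (starRingEnd ℂ) (u ω)) * ((starRingEnd ℂ) (w ω))) + ((a^2*b*c - a*b^2*c : ℝ) : ℂ) * ((u ω * (starRingEnd ℂ) (u ω) ^ 2) * (w ω))) volume := S2.add I3
  have S4 : Integrable (fun ω => ((a^2*b^2 : ℝ) : ℂ) * (u ω ^ 2 * (starRingEnd ℂ) (u ω) ^ 2) + ((a^2*b*c - a*b^2*c : ℝ) : ℂ) * ((u ω ^ 2 * (starRingEnd ℂ) (u ω)) * ((starRingEnd ℂ) (w ω))) + ((a^2*b*c - a*b^2*c : ℝ) : ℂ) * ((u ω * (starRingEnd ℂ) (u ω) ^ 2) * (w ω)) + ((a^2*c^2 - 2*a*b*c^2 + b^2*c^2 : ℝ) : ℂ) * ((u ω * (starRingEnd ℂ) (u ω)) * (w ω * (starRingEnd ℂ) (w ω)))) volume := S3.add I4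
  have S5 : Integrable (fun ω => ((a^2*b^2 : ℝ) : ℂ) * (u ω ^ 2 * (starRingEnd ℂ) (u ω) ^ 2) + ((a^2*b*c - a*b^2*c : ℝ) : ℂ) * ((u ω ^ 2 * (starRingEnd ℂ) (u ω)) * ((starRingEnd ℂ) (w ω))) + ((a^2*b*c - a*b^2*c : ℝ) : ℂ) * ((u ω * (starRingEnd ℂ) (u ω) ^ 2) * (w ω)) + ((a^2*c^2 - 2*a*b*c^2 + b^2*c^2 : ℝ) : ℂ) * ((u ω * (starRingEnd ℂ) (u ω)) * (w ω * (starRingEnd ℂ) (w ω))) + ((-(a*b*c^2) : ℝ) : ℂ) * ((u ω ^ 2) * ((starRingEnd ℂ) (w ω) ^ 2))) volume := S4.add I5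
  have S6 : Integrable (fun ω => ((a^2*b^2 : ℝ) : ℂ) * (u ω ^ 2 * (starRingEnd ℂ) (u ω) ^ 2) + ((a^2*b*c - a*b^2*c : ℝ) : ℂ) * ((u ω ^ 2 * (starRingEnd ℂ) (u ω)) * ((starRingEnd ℂ) (w ω))) + ((a^2*b*c - a*b^2*c : ℝ) : ℂ) * ((u ω * (starRingEnd ℂ) (u ω) ^ 2) * (w ω)) + ((a^2*c^2 - 2*a*b*c^2 + b^2*c^2 : ℝ) : ℂ) * ((u ω * (starRingEnd ℂ) (u ω)) * (w ω * (starRingEnd ℂ) (w ω))) + ((-(a*b*c^2) : ℝ) : ℂ) * ((u ω ^ 2) * ((starRingEnd ℂ) (w ω) ^ 2)) + ((-(a*b*c^2) : ℝ) : ℂ) * (((starRingEnd ℂ) (u ω) ^ 2) * (w ω ^ 2))) volume := S5.add I6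
  have S7 : Integrable (fun ω => ((a^2*b^2 : ℝ) : ℂ) * (u ω ^ 2 * (starRingEnd ℂ) (u ω) ^ 2) + ((a^2*b*c - a*b^2*c : ℝ) : ℂ) * ((u ω ^ 2 * (starRingEnd ℂ) (u ω)) * ((starRingEnd ℂ) (w ω))) + ((a^2*b*c - a*b^2*c : ℝ) : ℂ) * ((u ω * (starRingEnd ℂ) (u ω) ^ 2) * (w ω)) + ((a^2*c^2 - 2*a*b*c^2 + b^2*c^2 : ℝ) : ℂ) * ((u ω * (starRingEnd ℂ) (u ω)) * (w ω * (starRingEnd ℂ) (w ω))) + ((-(a*b*c^2) : ℝ) : ℂ) * ((u ω ^ 2) * ((starRingEnd ℂ) (w ω) ^ 2)) + ((-(a*b*c^2) : ℝ) : ℂ) * (((starRingEnd ℂ) (u ω) ^ 2) * (w ω ^ 2)) + ((b*c^3 - a*c^3 : ℝ) : ℂ) * ((u ω) * (w ω * (starRingEnd ℂ) (w ω) ^ 2))) volume := S6.add I7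
  have S8 : Integrable (fun ω => ((a^2*b^2 : ℝ) : ℂ) * (u ω ^ 2 * (starRingEnd ℂ) (u ω) ^ 2) + ((a^2*b*c - a*b^2*c : ℝ) : ℂ) * ((u ω ^ 2 * (starRingEnd ℂ) (u ω)) * ((starRingEnd ℂ) (w ω))) + ((a^2*b*c - a*b^2*c : ℝ) : ℂ) * ((u ω * (starRingEnd ℂ) (u ω) ^ 2) * (w ω)) + ((a^2*c^2 - 2*a*b*c^2 + b^2*c^2 : ℝ) : ℂ) * ((u ω * (starRingEnd ℂ) (u ω)) * (w ω * (starRingEnd ℂ) (w ω))) + ((-(a*b*c^2) : ℝ) : ℂ) * ((u ω ^ 2) * ((starRingEnd ℂ) (w ω) ^ 2)) + ((-(a*b*c^2) : ℝ) : ℂ) * (((starRingEnd ℂ) (u ω) ^ 2) * (w ω ^ 2)) + ((b*c^3 - a*c^3 : ℝ) : ℂ) * ((u ω) * (w ω * (starRingEnd ℂ) (w ω) ^ 2)) + ((b*c^3 - a*c^3 : ℝ) : ℂ) * (((starRingEnd ℂ) (u ω)) * (w ω ^ 2 * (starRingEnd ℂ) (w ω)))) volume := S7.add I8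
  have S9 : Integrable (fun ω => ((a^2*b^2 : ℝ) : ℂ) * (u ω ^ 2 * (starRingEnd ℂ) (u ω) ^ 2) + ((a^2*b*c - a*b^2*c : ℝ) : ℂ) * ((u ω ^ 2 * (starRingEnd ℂ) (u ω)) * ((starRingEnd ℂ) (w ω))) + ((a^2*b*c - a*b^2*c : ℝ) : ℂ) * ((u ω * (starRingEnd ℂ) (u ω) ^ 2) * (w ω)) + ((a^2*c^2 - 2*a*b*c^2 + b^2*c^2 : ℝ) : ℂ) * ((u ω * (starRingEnd ℂ) (u ω)) * (w ω * (starRingEnd ℂ) (w ω))) + ((-(a*b*c^2) : ℝ) : ℂ) * ((u ω ^ 2) * ((starRingEnd ℂ) (w ω) ^ 2)) + ((-(a*b*c^2) : ℝ) : ℂ) * (((starRingEnd ℂ) (u ω) ^ 2) * (w ω ^ 2)) + ((b*c^3 - a*c^3 : ℝ) : ℂ) * ((u ω) * (w ω * (starRingEnd ℂ) (w ω) ^ 2)) + ((b*c^3 - a*c^3 : ℝ) : ℂ) * (((starRingEnd ℂ) (u ω)) * (w ω ^ 2 * (starRingEnd ℂ) (w ω))) + ((c^4 : ℝ) : ℂ)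 * (w ω ^ 2 * (starRingEnd ℂ) (w ω) ^ 2)) volume := S8.add I9
  have V1 : (∫ ω, ((a^2*b^2 : ℝ) : ℂ) * (u ω ^ 2 * (starRingEnd ℂ) (u ω) ^ 2)) = ((a^2*b^2 : ℝ) : ℂ) * ((2 * p ^ 2 : ℝ) : ℂ) := by rw [integral_const_mul, Tu.val22]
  have V2 : (∫ ω, ((a^2*b*c - a*b^2*c : ℝ) : ℂ) * ((u ω ^ 2 * (starRingEnd ℂ) (u ω)) * ((starRingEnd ℂ) (w ω)))) = 0 := by rw [integral_const_mul, vp1, Tu.val21, zero_mul, mul_zero]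
  have V3 : (∫ ω, ((a^2*b*c - a*b^2*c : ℝ) : ℂ) * ((u ω * (starRingEnd ℂ) (u ω) ^ 2) * (w ω))) = 0 := by rw [integral_const_mul, vp2, Tu.val12, zero_mul, mul_zero]
  have V4 : (∫ ω, ((a^2*c^2 - 2*a*b*c^2 + b^2*c^2 : ℝ) : ℂ) * ((u ω * (starRingEnd ℂ) (u ω)) * (w ω * (starRingEnd ℂ) (w ω)))) = ((a^2*c^2 - 2*a*b*c^2 + b^2*c^2 : ℝ) : ℂ) * (((p : ℝ) : ℂ) * ((r : ℝ) : ℂ)) := by rw [integral_const_mul, vp3, Tu.val11, Tw.val11]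
  have V5 : (∫ ω, ((-(a*b*c^2) : ℝ) : ℂ) * ((u ω ^ 2) * ((starRingEnd ℂ) (w ω) ^ 2))) = 0 := by rw [integral_const_mul, vp4, Tu.val20, zero_mul, mul_zero]
  have V6 : (∫ ω, ((-(a*b*c^2) : ℝ) : ℂ) * (((starRingEnd ℂ) (u ω) ^ 2) * (w ω ^ 2))) = 0 := by rw [integral_const_mul, vp5, Tu.val02, zero_mul, mul_zero]
  have V7 : (∫ ω, ((b*c^3 - a*c^3 : ℝ) : ℂ) * ((u ω) * (w ω * (starRingEnd ℂ) (w ω) ^ 2))) = 0 := by rw [integral_const_mul, vp6, Tu.val10, zero_mul, mul_zero]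
  have V8 : (∫ ω, ((b*c^3 - a*c^3 : ℝ) : ℂ) * (((starRingEnd ℂ) (u ω)) * (w ω ^ 2 * (starRingEnd ℂ) (w ω)))) = 0 := by rw [integral_const_mul, vp7, Tu.val01, zero_mul, mul_zero]
  have V9 : (∫ ω, ((c^4 : ℝ) : ℂ) * (w ω ^ 2 * (starRingEnd ℂ) (w ω) ^ 2)) = ((c^4 : ℝ) : ℂ) * ((2 * r ^ 2 : ℝ) : ℂ) := by rw [integral_const_mul, Tw.val22]
  constructor
  · rw [key]; exact S9
  · rw [key]
    rw [integral_add S8 I9, integral_add S7 I8, integral_add S6 I7, integral_add S5 I6, integral_add S4 I5, integral_add S3 I4, integral_add S2 I3, integral_add I1 I2]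
    rw [V1, V2, V3, V4, V5, V6, V7, V8, V9]
    push_cast
    ring

end MeanDiag
theorem error_estimate_inner_second_moment
    {Ω : Type*} [MeasureSpace Ω] [IsProbabilityMeasure (volume : Measure Ω)]
    (N K : ℕ) (hN : 1 ≤ N) (hK : 1 ≤ K)
    (ρ β : ℝ) (hρ : 0 < ρ) (hβ : 0 < β)
    (q z : Ω → Fin N → ℂ) (hqm : Measurable q) (hzm : Measurable z)
    (hq : IsCNVec N β q) (hz : IsCNVec N 1 z)
    (hqz : IndepFun q z volume)
    (y : Ω → Fin N → ℂ)
    (hy : y = fun ω n => (Real.sqrt (ρ * K) : ℂ) * q ω n + z ω n)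
    (c : ℝ) (hc : c = Real.sqrt (ρ * K) * β / (ρ * K * β + 1))
    (γ : ℝ) (hγ : γ = Real.sqrt (ρ * K) * β * c)
    (qhat : Ω → Fin N → ℂ)
    (hqhat : qhat = fun ω n => (c : ℂ) * y ω n)
    (qtilde : Ω → Fin N → ℂ)
    (hqtilde : qtilde = fun ω n => q ω n - qhat ω n) :
    ∫ ω, ‖∑ n : Fin N, qtilde ω n * (starRingEnd ℂ) (qhat ω n)‖ ^ 2
      = N * γ * (β - γ) := by
  have hKr : (1:ℝ) ≤ (K:ℝ) := by exact_mod_cast hK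
  have hρK : 0 < ρ * (K:ℝ) := by nlinarith
  set s : ℝ := Real.sqrt (ρ * K) with hs
  have hs2 : s ^ 2 = ρ * K := Real.sq_sqrt hρK.le
  have hden' : s^2*β+1 ≠ 0 := by positivity
  have hc' : c = s*β/(s^2*β+1) := by rw [hc, ← hs2]
  have hzero : (1 - c*s)*(c*s)*β - c^2*1 = 0 := by
    rw [hc']; field_simp; ring
  have hdiagv : 2*(1 - c*s)^2*(c*s)^2*β^2 + ((1 - c*s)^2*c^2 - 2*(1 - c*s)*(c*s)*c^2 + (c*s)^2*c^2)*(β*1) + 2*c^4*1^2 = γ*(β-γ) := by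
    rw [hγ, hc']; field_simp; ring
  have hu : ∀ n, Measurable (fun ω => q ω n) := fun n => (measurable_pi_apply n).comp hqm
  have hw : ∀ n, Measurable (fun ω => z ω n) := fun n => (measurable_pi_apply n).comp hzm
  have Tu : ∀ n, CMomTable (fun ω => q ω n) β := fun n =>
    cmom_table (hu n) hβ (hq.2 n).1 (hq.2 n).2.1 (hq.2 n).2.2
  have Tw : ∀ n, CMomTable (fun ω => z ω n) 1 := fun n =>
    cmom_table (hw n) one_pos (hz.2 n).1 (hz.2 n).2.1 (hz.2 n).2.2
  have huw : ∀ n, IndepFun (fun ω => q ω n) (fun ω => z ω n) volume := fun n =>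
    hqz.comp (measurable_pi_apply n) (measurable_pi_apply n)
  have IntY : ∀ n, Integrable (fun ω => ((((1 - c*s : ℝ)) : ℂ) * q ω n - ((c : ℝ) : ℂ) * z ω n) * (starRingEnd ℂ) (((c*s : ℝ) : ℂ) * q ω n + ((c : ℝ) : ℂ) * z ω n)) volume := fun n =>
    (mean_lemma (huw n) (Tu n) (Tw n) (1 - c*s) (c*s) c).1
  have ValY : ∀ n, (∫ ω, ((((1 - c*s : ℝ)) : ℂ) * q ω n - ((c : ℝ) : ℂ) * z ω n) * (starRingEnd ℂ) (((c*s : ℝ) : ℂ) * q ω n + ((c : ℝ) : ℂ) * z ω n)) = 0 := by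
    intro n
    have h' : (∫ ω, ((((1 - c*s : ℝ)) : ℂ) * q ω n - ((c : ℝ) : ℂ) * z ω n) * (starRingEnd ℂ) (((c*s : ℝ) : ℂ) * q ω n + ((c : ℝ) : ℂ) * z ω n)) = (((1 - c*s)*(c*s)*β - c^2*1 : ℝ) : ℂ) :=
      (mean_lemma (huw n) (Tu n) (Tw n) (1 - c*s) (c*s) c).2
    rw [h', hzero]
    simp
  have DiagInt : ∀ n, Integrable (fun ω => (((((1 - c*s : ℝ)) : ℂ) * q ω n - ((c : ℝ) : ℂ) * z ω n) * (starRingEnd ℂ) (((c*s : ℝ) : ℂ) * q ω n + ((c : ℝ) : ℂ) * z ω n)) * (starRingEnd ℂ) (((((1 - c*s : ℝ)) : ℂ) * q ω n - ((c : ℝ) : ℂ) * z ω n) * (starRingEnd ℂ) (((c*s : ℝ) : ℂ) * q ω n + ((c : ℝ) : ℂ) * z ω n))) volume := fun n =>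
    (diag_lemma (huw n) (Tu n) (Tw n) (1 - c*s) (c*s) c).1
  have DiagVal : ∀ n, (∫ ω, (((((1 - c*s : ℝ)) : ℂ) * q ω n - ((c : ℝ) : ℂ) * z ω n) * (starRingEnd ℂ) (((c*s : ℝ) : ℂ) * q ω n + ((c : ℝ) : ℂ) * z ω n)) * (starRingEnd ℂ) (((((1 - c*s : ℝ)) : ℂ) * q ω n - ((c : ℝ) : ℂ) * z ω n) * (starRingEnd ℂ) (((c*s : ℝ) : ℂ) * q ω n + ((c : ℝ) : ℂ) * z ω n))) = ((γ*(β-γ) : ℝ) : ℂ) := by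
    intro n
    have h' : (∫ ω, (((((1 - c*s : ℝ)) : ℂ) * q ω n - ((c : ℝ) : ℂ) * z ω n) * (starRingEnd ℂ) (((c*s : ℝ) : ℂ) * q ω n + ((c : ℝ) : ℂ) * z ω n)) * (starRingEnd ℂ) (((((1 - c*s : ℝ)) : ℂ) * q ω n - ((c : ℝ) : ℂ) * z ω n) * (starRingEnd ℂ) (((c*s : ℝ) : ℂ) * q ω n + ((c : ℝ) : ℂ) * z ω n)))
        = ((2*(1 - c*s)^2*(c*s)^2*β^2 + ((1 - c*s)^2*c^2 - 2*(1 - c*s)*(c*s)*c^2 + (c*s)^2*c^2)*(β*1) + 2*c^4*1^2 : ℝ) : ℂ) :=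
      (diag_lemma (huw n) (Tu n) (Tw n) (1 - c*s) (c*s) c).2
    rw [h', hdiagv]
  have combined := combined_iIndep hqm hzm hq.1 hz.1 hqz
  have hFm : ∀ i : Fin N ⊕ Fin N, Measurable
      ((Sum.elim (fun n ω => q ω n) (fun n ω => z ω n) : Fin N ⊕ Fin N → Ω → ℂ) i) := by
    intro i
    cases i with
    | inl n => exact hu n
    | inr n => exact hw n
  have hpair : ∀ n m : Fin N, n ≠ m →
      IndepFun (fun ω => (q ω n, z ω n)) (fun ω => (q ω m, z ω m)) volume := fun n m hnm =>
    combined.indepFun_prodMk_prodMk hFm (Sum.inl n) (Sum.inr n) (Sum.inl m) (Sum.inr m)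
      (by simp [hnm]) (by simp) (by simp) (by simp [hnm])
  have hPhi : Measurable (fun pp : ℂ × ℂ =>
      ((((1 - c*s : ℝ)) : ℂ) * pp.1 - ((c : ℝ) : ℂ) * pp.2) *
      (starRingEnd ℂ) (((c*s : ℝ) : ℂ) * pp.1 + ((c : ℝ) : ℂ) * pp.2)) := by
    exact ((measurable_fst.const_mul _).sub (measurable_snd.const_mul _)).mul
      (Complex.continuous_conj.measurable.comp
        ((measurable_fst.const_mul _).add (measurable_snd.const_mul _)))
  have CrossIndep : ∀ n m : Fin N, n ≠ m →
      IndepFun (fun ω => ((((1 - c*s : ℝ)) : ℂ) * q ω n - ((c : ℝ) : ℂ) * z ω n) * (starRingEnd ℂ) (((c*s : ℝ) : ℂ) * q ω n + ((c : ℝ) : ℂ) * z ω n)) (fun ω => (starRingEnd ℂ) (((((1 - c*s : ℝ)) : ℂ) * q ω m - ((c : ℝ) : ℂ) * z ω m) * (starRingEnd ℂ) (((c*s : ℝ) : ℂ) * q ω m + ((c : ℝ) : ℂ) * z ω m))) volume :=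
    fun n m hnm => (hpair n m hnm).comp hPhi (Complex.continuous_conj.measurable.comp hPhi)
  have CrossInt : ∀ n m : Fin N, n ≠ m →
      Integrable (fun ω => (((((1 - c*s : ℝ)) : ℂ) * q ω n - ((c : ℝ) : ℂ) * z ω n) * (starRingEnd ℂ) (((c*s : ℝ) : ℂ) * q ω n + ((c : ℝ) : ℂ) * z ω n)) * (starRingEnd ℂ) (((((1 - c*s : ℝ)) : ℂ) * q ω m - ((c : ℝ) : ℂ) * z ω m) * (starRingEnd ℂ) (((c*s : ℝ) : ℂ) * q ω m + ((c : ℝ) : ℂ) * z ω m))) volume :=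
    fun n m hnm => (CrossIndep n m hnm).integrable_mul (IntY n) (integrable_cconj (IntY m))
  have CrossVal : ∀ n m : Fin N, n ≠ m →
      (∫ ω, (((((1 - c*s : ℝ)) : ℂ) * q ω n - ((c : ℝ) : ℂ) * z ω n) * (starRingEnd ℂ) (((c*s : ℝ) : ℂ) * q ω n + ((c : ℝ) : ℂ) * z ω n)) * (starRingEnd ℂ) (((((1 - c*s : ℝ)) : ℂ) * q ω m - ((c : ℝ) : ℂ) * z ω m) * (starRingEnd ℂ) (((c*s : ℝ) : ℂ) * q ω m + ((c : ℝ) : ℂ) * z ω m))) = 0 := by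
    intro n m hnm
    rw [indep_integral_cmul (CrossIndep n m hnm) (IntY n) (integrable_cconj (IntY m)),
      ValY n, zero_mul]
  have habs : ∀ zc : ℂ, ‖zc‖ ^ 2 = (zc * (starRingEnd ℂ) zc).re := fun zc => by
    rw [Complex.mul_conj, Complex.ofReal_re, Complex.sq_norm]
  have hgoal1 : (fun ω => ‖∑ n : Fin N, qtilde ω n * (starRingEnd ℂ) (qhat ω n)‖ ^ 2)
      = fun ω => (∑ n : Fin N, ∑ m : Fin N, (((((1 - c*s : ℝ)) : ℂ) * q ω n - ((c : ℝ) : ℂ) * z ω n) * (starRingEnd ℂ) (((c*s : ℝ) : ℂ) * q ω n + ((c : ℝ) : ℂ) * z ω n)) * (starRingEnd ℂ) (((((1 - c*s : ℝ)) : ℂ) * q ω m - ((c : ℝ) : ℂ) * z ω m) * (starRingEnd ℂ) (((c*s : ℝ) : ℂ) * q ω m + ((c : ℝ) : ℂ) * z ω m))).re := by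
    funext ω
    rw [habs]
    congr 1
    have e1 : (∑ n : Fin N, qtilde ω n * (starRingEnd ℂ) (qhat ω n))
        = ∑ n : Fin N, ((((1 - c*s : ℝ)) : ℂ) * q ω n - ((c : ℝ) : ℂ) * z ω n) * (starRingEnd ℂ) (((c*s : ℝ) : ℂ) * q ω n + ((c : ℝ) : ℂ) * z ω n) := Finset.sum_congr rfl fun n _ => by
      simp only [hqtilde, hqhat, hy, map_add, map_mul, Complex.conj_ofReal]
      push_cast
      ring
    rw [e1, map_sum, Finset.sum_mul_sum]
  rw [hgoal1]
  have hG : Integrable (fun ω => ∑ n : Fin N, ∑ m : Fin N, (((((1 - c*s : ℝ)) : ℂ) * q ω n - ((c : ℝ) : ℂ) * z ω n) * (starRingEnd ℂ) (((c*s : ℝ) : ℂ) * q ω n + ((c : ℝ) : ℂ) * z ω n)) * (starRingEnd ℂ) (((((1 - c*s : ℝ)) : ℂ) * q ω m - ((c : ℝ) : ℂ) * z ω m) * (starRingEnd ℂ) (((c*s : ℝ) : ℂ) * q ω m + ((c : ℝ) : ℂ) * z ω m))) volume :=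
    integrable_finset_sum _ fun n _ => integrable_finset_sum _ fun m _ => by
      by_cases hnm : n = m
      · subst hnm; exact DiagInt n
      · exact CrossInt n m hnm
  have h2 : ∫ ω, (∑ n : Fin N, ∑ m : Fin N, (((((1 - c*s : ℝ)) : ℂ) * q ω n - ((c : ℝ) : ℂ) * z ω n) * (starRingEnd ℂ) (((c*s : ℝ) : ℂ) * q ω n + ((c : ℝ) : ℂ) * z ω n)) * (starRingEnd ℂ) (((((1 - c*s : ℝ)) : ℂ) * q ω m - ((c : ℝ) : ℂ) * z ω m) * (starRingEnd ℂ) (((c*s : ℝ) : ℂ) * q ω m + ((c : ℝ) : ℂ) * z ω m))).re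
      = (∫ ω, ∑ n : Fin N, ∑ m : Fin N, (((((1 - c*s : ℝ)) : ℂ) * q ω n - ((c : ℝ) : ℂ) * z ω n) * (starRingEnd ℂ) (((c*s : ℝ) : ℂ) * q ω n + ((c : ℝ) : ℂ) * z ω n)) * (starRingEnd ℂ) (((((1 - c*s : ℝ)) : ℂ) * q ω m - ((c : ℝ) : ℂ) * z ω m) * (starRingEnd ℂ) (((c*s : ℝ) : ℂ) * q ω m + ((c : ℝ) : ℂ) * z ω m))).re := by
    simpa using integral_re hG
  rw [h2]
  have h3 : (∫ ω, ∑ n : Fin N, ∑ m : Fin N, (((((1 - c*s : ℝ)) : ℂ) * q ω n - ((c : ℝ) : ℂ) * z ω n) * (starRingEnd ℂ) (((c*s : ℝ) : ℂ) * q ω n + ((c : ℝ) : ℂ) * z ω n)) * (starRingEnd ℂ) (((((1 - c*s : ℝ)) : ℂ) * q ω m - ((c : ℝ) : ℂ) * z ω m) * (starRingEnd ℂ) (((c*s : ℝ) : ℂ) * q ω m + ((c : ℝ) : ℂ) * z ω m)))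
      = (N : ℂ) * ((γ*(β-γ) : ℝ) : ℂ) := by
    rw [integral_finset_sum _ (fun n _ => integrable_finset_sum _ (fun m _ => by
      by_cases hnm : n = m
      · subst hnm; exact DiagInt n
      · exact CrossInt n m hnm))]
    have hinner : ∀ n : Fin N, (∫ ω, ∑ m : Fin N, (((((1 - c*s : ℝ)) : ℂ) * q ω n - ((c : ℝ) : ℂ) * z ω n) * (starRingEnd ℂ) (((c*s : ℝ) : ℂ) * q ω n + ((c : ℝ) : ℂ) * z ω n)) * (starRingEnd ℂ) (((((1 - c*s : ℝ)) : ℂ) * q ω m - ((c : ℝ) : ℂ) * z ω m) * (starRingEnd ℂ) (((c*s : ℝ) : ℂ) * q ω m + ((c : ℝ) : ℂ) * z ω m)))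
        = ((γ*(β-γ) : ℝ) : ℂ) := by
      intro n
      rw [integral_finset_sum _ (fun m _ => by
        by_cases hnm : n = m
        · subst hnm; exact DiagInt n
        · exact CrossInt n m hnm)]
      have hterm : ∀ m : Fin N, (∫ ω, (((((1 - c*s : ℝ)) : ℂ) * q ω n - ((c : ℝ) : ℂ) * z ω n) * (starRingEnd ℂ) (((c*s : ℝ) : ℂ) * q ω n + ((c : ℝ) : ℂ) * z ω n)) * (starRingEnd ℂ) (((((1 - c*s : ℝ)) : ℂ) * q ω m - ((c : ℝ) : ℂ) * z ω m) * (starRingEnd ℂ) (((c*s : ℝ) : ℂ) * q ω m + ((c : ℝ) : ℂ) * z ω m)))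
          = if n = m then ((γ*(β-γ) : ℝ) : ℂ) else 0 := by
        intro m
        by_cases hnm : n = m
        · subst hnm; rw [if_pos rfl]; exact DiagVal n
        · rw [if_neg hnm]; exact CrossVal n m hnm
      rw [Finset.sum_congr rfl (fun m _ => hterm m), Finset.sum_ite_eq]
      simp
    rw [Finset.sum_congr rfl (fun n _ => hinner n), Finset.sum_const, Finset.card_univ,
      Fintype.card_fin, nsmul_eq_mul]
  rw [h3]
  have h4 : ((N : ℂ) * ((γ*(β-γ) : ℝ) : ℂ)) = (((N*(γ*(β-γ)) : ℝ)) : ℂ) := by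
    push_cast; ring
  rw [h4, Complex.ofReal_re]
  ring
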